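/- Given a clique partition of K_n into cliques Q_1, ..., Q_N each of order at most k, and a graph F on the same n vertices with m edges, the complement of F admits a clique partition into at most N + 2mk cliques. -/

import Mathlib

/-- `P` is a clique partition of `G`. -/
def IsCliquePartition {V : Type*} (G : SimpleGraph V) (P : Finset (Finset V)) : Prop :=
  (∀ Q ∈ P, ∀ u ∈ Q, ∀ v ∈ Q, u ≠ v → G.Adj u v) ∧
  (∀ u v : V, G.Adj u v → ∃! Q : Finset V, Q ∈ P ∧ u ∈ Q ∧ v ∈ Q)

/-!
Inside each clique `Q` of the partition of `K_n`, let `T ⊆ Q` be the set of vertices incident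
to an edge of `F` lying in `Q`. The vertices of `Q \ T` have full degree in `Fᶜ[Q]`, so they
form one clique of `Fᶜ`, and every other edge of `Fᶜ[Q]` has an endpoint in `T`; taking those
edges as `2`-cliques partitions `Fᶜ[Q]` into at most `1 + |T| k` cliques. Since `|T|` is at
most the number of ordered `F`-edges inside `Q`, and each edge of `F` lies in exactly one `Q`,
summing over `Q` gives at most `N + 2mk` cliques.
-/

open Finset

variable {V : Type*}

namespace SimpleGraph

@[simp]
lemma spanningCoe_induce_adj {G : SimpleGraph V} {s : Set V} {u v : V} :
    (G.induce s).spanningCoe.Adj u v ↔ G.Adj u v ∧ u ∈ s ∧ v ∈ s := by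
  simp [map_adj]

instance [DecidableEq V] {G : SimpleGraph V} [DecidableRel G.Adj] {s : Finset V} :
    DecidableRel (G.induce (s : Set V)).spanningCoe.Adj :=
  fun _ _ => decidable_of_iff' _ spanningCoe_induce_adj

end SimpleGraph

lemma Finset.pair_eq_of_mem_pair [DecidableEq V] {a b u v : V} (huv : u ≠ v)
    (hu : u ∈ ({a, b} : Finset V)) (hv : v ∈ ({a, b} : Finset V)) :
    ({a, b} : Finset V) = {u, v} := by
  simp only [mem_insert, mem_singleton] at hu hv
  rcases hu with rfl | rfl <;> rcases hv with rfl | rfl <;> simp_all [pair_comm]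

lemma IsCliquePartition.biUnion [DecidableEq V] {G H : SimpleGraph V} {P : Finset (Finset V)}
    {R : Finset V → Finset (Finset V)} (hP : IsCliquePartition G P) (hHG : H ≤ G)
    (hR : ∀ Q ∈ P, IsCliquePartition (H.induce (Q : Set V)).spanningCoe (R Q)) :
    IsCliquePartition H (P.biUnion R) := by
  refine ⟨fun X hX u hu v hv huv => ?_, fun u v huv => ?_⟩
  · obtain ⟨Q, hQ, hXQ⟩ := mem_biUnion.1 hX
    exact (SimpleGraph.spanningCoe_induce_adj.1 ((hR Q hQ).1 X hXQ u hu v hv huv)).1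
  obtain ⟨Q, ⟨hQ, huQ, hvQ⟩, hQ_unique⟩ := hP.2 u v (hHG huv)
  obtain ⟨X, ⟨hXQ, huX, hvX⟩, hX_unique⟩ :=
    (hR Q hQ).2 u v (SimpleGraph.spanningCoe_induce_adj.2 ⟨huv, huQ, hvQ⟩)
  refine ⟨X, ⟨mem_biUnion.2 ⟨Q, hQ, hXQ⟩, huX, hvX⟩, ?_⟩
  rintro Y ⟨hY, huY, hvY⟩
  obtain ⟨Q', hQ', hYQ'⟩ := mem_biUnion.1 hY
  obtain ⟨-, huQ', hvQ'⟩ :=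
    SimpleGraph.spanningCoe_induce_adj.1 ((hR Q' hQ').1 Y hYQ' u huY v hvY huv.ne)
  obtain rfl := hQ_unique Q' ⟨hQ', huQ', hvQ'⟩
  exact hX_unique Y ⟨hYQ', huY, hvY⟩

section CliqueWithEdges

variable [DecidableEq V] (H : SimpleGraph V) [DecidableRel H.Adj] (S A : Finset V)

def cliqueWithEdges : Finset (Finset V) :=
  insert A <| ((S ×ˢ S).filter fun p => H.Adj p.1 p.2 ∧ ¬(p.1 ∈ A ∧ p.2 ∈ A)).image
    fun p => {p.1, p.2}

variable {H S A}

lemma isClique_of_mem_cliqueWithEdges (hA : H.IsClique (A : Set V)) {X : Finset V}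
    (hX : X ∈ cliqueWithEdges H S A) : H.IsClique (X : Set V) := by
  rcases mem_insert.1 hX with rfl | hX
  · exact hA
  obtain ⟨⟨a, b⟩, hab, rfl⟩ := mem_image.1 hX
  rw [coe_pair]
  exact SimpleGraph.isClique_pair.2 fun _ => (mem_filter.1 hab).2.1

lemma eq_of_mem_cliqueWithEdges {X : Finset V} (hX : X ∈ cliqueWithEdges H S A)
    {u v : V} (hu : u ∈ X) (hv : v ∈ X) (huv : u ≠ v) :
    X = if u ∈ A ∧ v ∈ A then A else {u, v} := by
  rcases mem_insert.1 hX with rfl | hX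
  · exact (if_pos ⟨hu, hv⟩).symm
  obtain ⟨⟨a, b⟩, hab, rfl⟩ := mem_image.1 hX
  have hab_out : ¬(a ∈ A ∧ b ∈ A) := (mem_filter.1 hab).2.2
  have huv_ab : ({a, b} : Finset V) = {u, v} := pair_eq_of_mem_pair huv hu hv
  rw [huv_ab, if_neg]
  rintro ⟨huA, hvA⟩
  have hab_sub : ({a, b} : Finset V) ⊆ A :=
    huv_ab ▸ insert_subset huA (singleton_subset_iff.2 hvA)
  exact hab_out ⟨hab_sub (mem_insert_self _ _),
    hab_sub (mem_insert_of_mem (mem_singleton_self _))⟩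

lemma isCliquePartition_cliqueWithEdges (hA : H.IsClique (A : Set V))
    (hS : ∀ ⦃u v⦄, H.Adj u v → u ∈ S) : IsCliquePartition H (cliqueWithEdges H S A) := by
  refine ⟨fun X hX u hu v hv huv => isClique_of_mem_cliqueWithEdges hA hX hu hv huv,
    fun u v huv => ?_⟩
  have hX : (if u ∈ A ∧ v ∈ A then A else {u, v}) ∈ cliqueWithEdges H S A := by
    split_ifs with huvA
    · exact mem_insert_self _ _
    · refine mem_insert_of_mem (mem_image.2 ⟨(u, v), ?_, rfl⟩)
      simpa [hS huv, hS huv.symm, huv] using huvA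
  refine ⟨_, ⟨hX, ?_, ?_⟩,
    fun Y ⟨hY, huY, hvY⟩ => eq_of_mem_cliqueWithEdges hY huY hvY huv.ne⟩
  all_goals split_ifs with huvA <;> simp_all

lemma card_cliqueWithEdges_le : #(cliqueWithEdges H S A) ≤ 1 + #(S \ A) * #S := by
  have h_edges : ((S ×ˢ S).filter fun p => H.Adj p.1 p.2 ∧ ¬(p.1 ∈ A ∧ p.2 ∈ A)).image
      (fun p => ({p.1, p.2} : Finset V)) ⊆ ((S \ A) ×ˢ S).image fun p => {p.1, p.2} := by
    intro X hX
    obtain ⟨⟨a, b⟩, hab, rfl⟩ := mem_image.1 hX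
    simp only [mem_filter, mem_product] at hab
    obtain ⟨⟨haS, hbS⟩, -, hab_out⟩ := hab
    by_cases haA : a ∈ A
    · exact mem_image.2 ⟨(b, a), mem_product.2
        ⟨mem_sdiff.2 ⟨hbS, fun hbA => hab_out ⟨haA, hbA⟩⟩, haS⟩, pair_comm _ _⟩
    · exact mem_image.2 ⟨(a, b), mem_product.2 ⟨mem_sdiff.2 ⟨haS, haA⟩, hbS⟩, rfl⟩
  calc #(cliqueWithEdges H S A)
      ≤ 1 + #(((S \ A) ×ˢ S).image fun p => ({p.1, p.2} : Finset V)) := by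
        grw [cliqueWithEdges, card_insert_le, card_le_card h_edges, add_comm]
    _ ≤ 1 + #(S \ A) * #S := by grw [card_image_le, card_product]

end CliqueWithEdges

section LocalPartition

variable [DecidableEq V] (F : SimpleGraph V) [DecidableRel F.Adj] (Q : Finset V)

def adjPairsIn : Finset (V × V) :=
  (Q ×ˢ Q).filter fun p => F.Adj p.1 p.2

def incidentIn : Finset V :=
  (adjPairsIn F Q).image Prod.fst

def localPartition : Finset (Finset V) :=
  cliqueWithEdges (Fᶜ.induce (Q : Set V)).spanningCoe Q (Q \ incidentIn F Q)

lemma isClique_sdiff_incidentIn :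
    (Fᶜ.induce (Q : Set V)).spanningCoe.IsClique ((Q \ incidentIn F Q : Finset V) : Set V) := by
  intro u hu v hv huv
  simp only [coe_sdiff, Set.mem_sdiff, mem_coe] at hu hv
  refine SimpleGraph.spanningCoe_induce_adj.2
    ⟨(SimpleGraph.compl_adj _ _ _).2 ⟨huv, fun hF => hu.2 ?_⟩, hu.1, hv.1⟩
  exact mem_image.2 ⟨(u, v), mem_filter.2 ⟨mem_product.2 ⟨hu.1, hv.1⟩, hF⟩, rfl⟩

lemma isCliquePartition_localPartition :
    IsCliquePartition (Fᶜ.induce (Q : Set V)).spanningCoe (localPartition F Q) :=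
  isCliquePartition_cliqueWithEdges (isClique_sdiff_incidentIn F Q)
    fun _ _ h => (SimpleGraph.spanningCoe_induce_adj.1 h).2.1

lemma card_localPartition_le : #(localPartition F Q) ≤ 1 + #(adjPairsIn F Q) * #Q :=
  calc #(localPartition F Q) ≤ 1 + #(Q \ (Q \ incidentIn F Q)) * #Q := card_cliqueWithEdges_le
    _ ≤ 1 + #(adjPairsIn F Q) * #Q := by
      grw [sdiff_sdiff_right_self, inf_eq_inter, card_le_card inter_subset_right, incidentIn,
        card_image_le]

/-- An edge of `F` lies in only one clique of `P`, so the sets `adjPairsIn F Q` are disjoint. -/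
lemma IsCliquePartition.sum_card_adjPairsIn_le [Fintype V] {G : SimpleGraph V}
    {P : Finset (Finset V)} (hP : IsCliquePartition G P) (hFG : F ≤ G) :
    ∑ Q ∈ P, #(adjPairsIn F Q) ≤ 2 * #F.edgeFinset := by
  have h_disj : (P : Set (Finset V)).PairwiseDisjoint (adjPairsIn F) := by
    intro Q hQ Q' hQ' hne
    refine disjoint_left.2 fun p hp hp' => hne ?_
    simp only [adjPairsIn, mem_filter, mem_product] at hp hp'
    obtain ⟨_, -, h_unique⟩ := hP.2 p.1 p.2 (hFG hp.2)
    exact (h_unique Q ⟨hQ, hp.1⟩).trans (h_unique Q' ⟨hQ', hp'.1⟩).symm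
  rw [← card_biUnion h_disj, SimpleGraph.two_mul_card_edgeFinset]
  refine card_le_card fun p hp => ?_
  obtain ⟨Q, -, hpQ⟩ := mem_biUnion.1 hp
  simpa using (mem_filter.1 hpQ).2

end LocalPartition

/-- Given a clique partition of `K_n` into `N` cliques each of order at
most `k`, and a graph `F` on the same `n` vertices with `m` edges, the complement of `F`
admits a clique partition into at most `N + 2mk` cliques. -/
theorem stmt14 (n k : ℕ) (F : SimpleGraph (Fin n))
    (P : Finset (Finset (Fin n))) (hP : IsCliquePartition (⊤ : SimpleGraph (Fin n)) P)
    (hk : ∀ Q ∈ P, Q.card ≤ k) :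
    ∃ P' : Finset (Finset (Fin n)), IsCliquePartition Fᶜ P' ∧
      P'.card ≤ P.card + 2 * F.edgeSet.ncard * k := by
  classical
  refine ⟨P.biUnion (localPartition F),
    hP.biUnion le_top fun Q _ => isCliquePartition_localPartition F Q, ?_⟩
  have h_edges : F.edgeSet.ncard = #F.edgeFinset := by
    rw [← SimpleGraph.coe_edgeFinset, Set.ncard_coe_finset]
  calc #(P.biUnion (localPartition F))
      ≤ ∑ Q ∈ P, #(localPartition F Q) := card_biUnion_le
    _ ≤ ∑ Q ∈ P, (1 + #(adjPairsIn F Q) * k) := sum_le_sum fun Q hQ =>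
        (card_localPartition_le F Q).trans (by grw [hk Q hQ])
    _ = #P + (∑ Q ∈ P, #(adjPairsIn F Q)) * k := by
        rw [sum_add_distrib, sum_const, smul_eq_mul, mul_one, sum_mul]
    _ ≤ #P + 2 * F.edgeSet.ncard * k := by
        grw [hP.sum_card_adjPairsIn_le F le_top, h_edges]
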